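/- (Undershoot control, frequentist version of Theorem 2.) Let τ > 0 and 0 < A < 1 + τ, and set β = g_o(A,τ). Then β > 0 and for every square-summable θ : ℕ → ℝ and every integer n ≥ 1: P_θ({x ∈ ℝ^ℕ : there exists d with 1 ≤ d ≤ d_τ(θ) − n and crit_A(x,d) ≤ crit_A(x,d_τ(θ))}) ≤ e^{−βn} / (1 − e^{−β}). -/

import Mathlib

open MeasureTheory ProbabilityTheory

noncomputable section

/-- Tail sum `∑_{i>d} θ_i²` (indices `i = 1,2,…`). -/
def tailSum (θ : ℕ → ℝ) (d : ℕ) : ℝ := ∑' i : ℕ, if d < i then θ i ^ 2 else 0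

/-- The τ-quantization error `r_τ(d,θ) = ∑_{i>d} θ_i² + τ d ε²`. -/
def rErr (ε τ : ℝ) (θ : ℕ → ℝ) (d : ℕ) : ℝ := tailSum θ d + τ * d * ε ^ 2

/-- The local effective τ-dimension: the smallest `d ≥ 1` minimizing `r_τ(·,θ)` over `d ≥ 1`. -/
def effDim (ε τ : ℝ) (θ : ℕ → ℝ) : ℕ :=
  sInf {d : ℕ | 1 ≤ d ∧ ∀ d' : ℕ, 1 ≤ d' → rErr ε τ θ d ≤ rErr ε τ θ d'}

/-- The penalized criterion `crit_A(x,d) = -∑_{i=1}^d x_i² + A ε² d`. -/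
def critF (ε A : ℝ) (x : ℕ → ℝ) (d : ℕ) : ℝ :=
  -(∑ i ∈ Finset.Icc 1 d, x i ^ 2) + A * ε ^ 2 * d

/-- `f(h,a,t) = (1/2)(a h + log(1-h) - t h/(1-h))`. -/
def fFun (h a t : ℝ) : ℝ := (a * h + Real.log (1 - h) - t * h / (1 - h)) / 2

/-- `g(h,a,t) = f(-h,a,t)`. -/
def gFun (h a t : ℝ) : ℝ := fFun (-h) a t

/-- `f_o(a,t) = sup_{h ∈ [0,1)} f(h,a,t)`. -/
def fSup (a t : ℝ) : ℝ := sSup ((fun h => fFun h a t) '' Set.Ico 0 1)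

/-- `g_o(a,t) = sup_{h ∈ [0,1]} g(h,a,t)`. -/
def gSup (a t : ℝ) : ℝ := sSup ((fun h => gFun h a t) '' Set.Icc 0 1)

/-- `P` is the infinite product measure `⨂_{i≥1} N(θ_i, ε²)` on the sequence space `ℝ^ℕ`,
characterized by being a probability measure whose finite-dimensional projections onto
the coordinates `1,…,n` are the corresponding finite products of Gaussians. -/
def IsGaussianProduct (ε : ℝ) (θ : ℕ → ℝ) (P : Measure (ℕ → ℝ)) : Prop :=
  IsProbabilityMeasure P ∧
  ∀ n : ℕ, P.map (fun x (i : Fin n) => x ((i : ℕ) + 1)) =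
    Measure.pi fun i : Fin n => gaussianReal (θ ((i : ℕ) + 1)) ((ε ^ 2).toNNReal)

/-! ### Auxiliary lemmas -/

lemma gauss_int (c μ : ℝ) (hc : 0 ≤ c) {v : NNReal} (hv : v ≠ 0) :
    ∫ x, Real.exp (-(c * x ^ 2)) ∂(gaussianReal μ v) =
      Real.exp (-(c * μ ^ 2) / (1 + 2 * c * v)) / Real.sqrt (1 + 2 * c * v) := by
  have hV : (0:ℝ) < (v:ℝ) := by exact_mod_cast hv.bot_lt
  set V : ℝ := (v:ℝ) with hVdef
  have hb : (0:ℝ) < c + 1/(2*V) := by positivity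
  set b : ℝ := c + 1/(2*V) with hbdef
  set m : ℝ := μ/(2*V*b) with hmdef
  set K : ℝ := b * m^2 - μ^2/(2*V) with hKdef
  have h1 : ∫ x, Real.exp (-(c * x ^ 2)) ∂(gaussianReal μ v)
      = ∫ x, gaussianPDFReal μ v x * Real.exp (-(c * x ^ 2)) := by
    rw [gaussianReal_of_var_ne_zero _ hv]
    have hd : (gaussianPDF μ v) = fun x =>
        ((fun y => Real.toNNReal (gaussianPDFReal μ v y)) x : ENNReal) := by
      ext x; simp [gaussianPDF, ENNReal.ofReal]
    rw [hd, integral_withDensity_eq_integral_smul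
      ((measurable_gaussianPDFReal μ v).real_toNNReal)]
    congr 1; ext x
    rw [NNReal.smul_def, smul_eq_mul, Real.coe_toNNReal _ (gaussianPDFReal_nonneg μ v x)]
  rw [h1]
  have hb' : b ≠ 0 := ne_of_gt hb
  have hV' : V ≠ 0 := ne_of_gt hV
  have h2 : ∀ x : ℝ, gaussianPDFReal μ v x * Real.exp (-(c * x ^ 2))
      = ((Real.sqrt (2*Real.pi*V))⁻¹ * Real.exp K) * Real.exp (-(b * (x - m)^2)) := by
    intro x
    rw [gaussianPDFReal, ← hVdef, mul_assoc, ← Real.exp_add]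
    conv_rhs => rw [mul_assoc, ← Real.exp_add]
    congr 2
    rw [hKdef, hmdef, hbdef]
    field_simp
    ring
  simp_rw [h2]
  rw [integral_const_mul]
  have h3 : ∫ x : ℝ, Real.exp (-(b * (x - m)^2)) = Real.sqrt (Real.pi / b) := by
    rw [show (fun x : ℝ => Real.exp (-(b * (x - m)^2)))
        = fun x => (fun y => Real.exp (-b * y^2)) (x - m) by ext x; ring_nf]
    rw [integral_sub_right_eq_self (fun y => Real.exp (-b * y^2)) m]
    exact integral_gaussian b
  rw [h3]
  have hK : K = -(c * μ ^ 2) / (1 + 2 * c * V) := by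
    rw [hKdef, hmdef, hbdef]
    field_simp
    ring
  rw [hK, div_eq_mul_inv (Real.exp _), mul_comm _ (Real.exp _), mul_assoc]
  congr 1
  have h2vb : 1 + 2*c*V = 2*V*b := by rw [hbdef]; field_simp; ring
  rw [h2vb, ← Real.sqrt_inv, ← Real.sqrt_mul (by positivity), ← Real.sqrt_inv]
  congr 1
  field_simp

lemma integral_pi_prod : ∀ {n : ℕ} (μ : Fin n → Measure ℝ), (∀ i, IsProbabilityMeasure (μ i)) →
    ∀ (f : Fin n → ℝ → ℝ),
    ∫ x : Fin n → ℝ, ∏ i, f i (x i) ∂Measure.pi μ = ∏ i, ∫ x, f i x ∂μ i := by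
  intro n
  induction n with
  | zero =>
    intro μ hμ f
    haveI := hμ
    simp only [Finset.univ_eq_empty, Finset.prod_empty]
    haveI : IsProbabilityMeasure (Measure.pi μ) := by infer_instance
    simp
  | succ n ih =>
    intro μ hμ f
    haveI := hμ
    calc ∫ x : Fin (n+1) → ℝ, ∏ i, f i (x i) ∂Measure.pi μ
        = ∫ p : ℝ × (Fin n → ℝ), f 0 p.1 * ∏ i : Fin n, f i.succ (p.2 i)
            ∂((μ 0).prod (Measure.pi fun i => μ i.succ)) := by
          rw [← ((measurePreserving_piFinSuccAbove μ 0).symm).integral_comp']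
          congr 1
          ext p
          simp [MeasurableEquiv.piFinSuccAbove_symm_apply, Fin.insertNthEquiv,
            Fin.prod_univ_succ, Fin.insertNth_zero, Fin.cons_succ,
            Fin.zero_succAbove, Fin.cons_zero]
      _ = (∫ x, f 0 x ∂μ 0) * ∏ i : Fin n, ∫ x, f i.succ x ∂μ i.succ := by
          rw [← ih (fun i => μ i.succ) (fun i => hμ i.succ) (fun i => f i.succ),
            ← integral_prod_mul]
      _ = ∏ i, ∫ x, f i x ∂μ i := by rw [Fin.prod_univ_succ]

lemma chernoff {D : ℕ} (ε A τ h : ℝ) (hε : 0 < ε) (hh0 : 0 < h)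
    (θ' : Fin D → ℝ) (s : Finset (Fin D))
    (hS : τ * ε^2 * s.card ≤ ∑ i ∈ s, θ' i ^ 2) :
    (Measure.pi fun i => gaussianReal (θ' i) ((ε^2).toNNReal))
        {y | ∑ i ∈ s, y i ^ 2 ≤ A * ε^2 * s.card}
      ≤ ENNReal.ofReal (Real.exp (-(gFun h A τ) * s.card)) := by
  set v : NNReal := (ε^2).toNNReal with hvdef
  have hv : v ≠ 0 := by
    simp only [hvdef, ne_eq, Real.toNNReal_eq_zero, not_le]
    positivity
  have hVc : (v:ℝ) = ε^2 := Real.coe_toNNReal _ (by positivity)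
  set μs : Fin D → Measure ℝ := fun i => gaussianReal (θ' i) v with hμs
  haveI : ∀ i, IsProbabilityMeasure (μs i) := fun i => by
    rw [hμs]; infer_instance
  set P : Measure (Fin D → ℝ) := Measure.pi μs with hP
  haveI : IsProbabilityMeasure P := by rw [hP]; infer_instance
  set X : (Fin D → ℝ) → ℝ := fun y => ∑ i ∈ s, y i ^ 2 with hX
  set c : ℝ := h / (2 * ε^2) with hc
  have hc0 : 0 < c := by positivity
  set t : ℝ := -c with ht
  have ht0 : t ≤ 0 := by simp only [ht, neg_nonpos]; positivity
  have hXm : Measurable X := by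
    apply Finset.measurable_sum
    intro i _
    exact (measurable_pi_apply i).pow_const 2
  have hX0 : ∀ y, 0 ≤ X y := fun y => Finset.sum_nonneg fun i _ => sq_nonneg _
  have hint : Integrable (fun ω => Real.exp (t * X ω)) P := by
    refine Integrable.mono' (integrable_const 1) ((hXm.const_mul t).exp.aestronglyMeasurable) ?_
    filter_upwards with y
    rw [Real.norm_eq_abs, abs_of_pos (Real.exp_pos _)]
    rw [show (1:ℝ) = Real.exp 0 by simp]
    exact Real.exp_le_exp.mpr (mul_nonpos_of_nonpos_of_nonneg ht0 (hX0 y))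
  have hcher := measure_le_le_exp_mul_mgf (X := X) (μ := P) (A * ε^2 * s.card) ht0 hint
  set g : Fin D → ℝ → ℝ := fun i => if i ∈ s then (fun z => Real.exp (t * z^2)) else (fun _ => 1)
    with hg
  have hgy : ∀ (i : Fin D) (z : ℝ), g i z = if i ∈ s then Real.exp (t * z ^ 2) else 1 := by
    intro i z; rw [hg]; by_cases hi : i ∈ s <;> simp [hi]
  have h2cv : (1:ℝ) + 2 * c * (v:ℝ) = 1 + h := by
    rw [hVc, hc]; field_simp
  have hprod : ∀ y : Fin D → ℝ, Real.exp (t * X y) = ∏ i, g i (y i) := by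
    intro y
    rw [hX, Finset.mul_sum, Real.exp_sum]
    simp only [hgy]
    rw [Finset.prod_ite_mem, Finset.univ_inter]
  have hIi : ∀ i : Fin D, ∫ z, g i z ∂μs i
      = if i ∈ s then Real.exp (-(c * θ' i ^ 2) / (1 + h)) / Real.sqrt (1 + h) else 1 := by
    intro i
    by_cases hi : i ∈ s
    · rw [if_pos hi]
      have hfe : (fun z => g i z) = fun z => Real.exp (-(c * z ^ 2)) := by
        funext z; rw [hgy i z, if_pos hi, ht]; ring_nf
      have : (∫ z, g i z ∂μs i) = ∫ z, Real.exp (-(c * z ^ 2)) ∂(gaussianReal (θ' i) v) := by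
        rw [hfe]
      rw [this, gauss_int c (θ' i) hc0.le hv, h2cv]
    · rw [if_neg hi]
      have hfe : (fun z => g i z) = fun _ => (1:ℝ) := by
        funext z; rw [hgy i z, if_neg hi]
      rw [show (∫ z, g i z ∂μs i) = ∫ _, (1:ℝ) ∂μs i from by rw [hfe]]
      simp
  have hmgf : mgf X P t = ∏ i ∈ s, (Real.exp (-(c * θ' i ^ 2) / (1 + h)) / Real.sqrt (1 + h)) := by
    rw [mgf]
    simp_rw [hprod]
    rw [hP, integral_pi_prod μs (fun i => inferInstance) g]
    rw [Finset.prod_congr rfl (fun i _ => hIi i), Finset.prod_ite_mem, Finset.univ_inter]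
  have h1 : (0:ℝ) < 1 + h := by linarith
  set L : ℝ := Real.log (1 + h) with hL
  have hsqrt : Real.sqrt (1 + h) = Real.exp (L / 2) := by
    rw [hL, ← Real.log_sqrt h1.le, Real.exp_log (Real.sqrt_pos.mpr h1)]
  set m : ℝ := (s.card : ℝ) with hm
  have hm0 : 0 ≤ m := by positivity
  have hreal : Real.exp (-t * (A * ε^2 * m)) * mgf X P t ≤ Real.exp (-(gFun h A τ) * m) := by
    rw [hmgf]
    have : ∀ i ∈ s, Real.exp (-(c * θ' i ^ 2) / (1 + h)) / Real.sqrt (1 + h)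
        = Real.exp (-(c * θ' i ^ 2) / (1 + h) - L / 2) := by
      intro i _; rw [hsqrt, Real.exp_sub]
    rw [Finset.prod_congr rfl this, ← Real.exp_sum, ← Real.exp_add, Real.exp_le_exp]
    rw [Finset.sum_sub_distrib, Finset.sum_const, nsmul_eq_mul, ← hm]
    have hsum : ∑ i ∈ s, -(c * θ' i ^ 2) / (1 + h) = -(c / (1+h)) * ∑ i ∈ s, θ' i ^ 2 := by
      rw [Finset.mul_sum]; exact Finset.sum_congr rfl fun i _ => by field_simp
    rw [hsum]
    have hgf : gFun h A τ = (-(A*h) + L + τ*h/(1+h)) / 2 := by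
      rw [gFun, fFun, hL]
      have e1 : (1:ℝ) - -h = 1 + h := by ring
      rw [e1]
      ring
    rw [hgf, ht, hc]
    have hcs : (h / (2*ε^2)) / (1+h) * (τ * ε^2 * m) ≤ (h / (2*ε^2)) / (1+h) * ∑ i ∈ s, θ' i ^ 2 := by
      apply mul_le_mul_of_nonneg_left hS
      positivity
    have he2 : (h / (2*ε^2)) / (1+h) * (τ * ε^2 * m) = τ * h / (1+h) * m / 2 := by
      field_simp
    rw [he2] at hcs
    have hAe : -(-(h / (2*ε^2))) * (A * ε^2 * m) = A * h * m / 2 := by field_simp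
    rw [hAe]
    nlinarith [hcs]
  have hne : P {y | ∑ i ∈ s, y i ^ 2 ≤ A * ε^2 * s.card} ≠ ⊤ := measure_ne_top _ _
  calc P {y | ∑ i ∈ s, y i ^ 2 ≤ A * ε^2 * s.card}
      = ENNReal.ofReal ((P {y | ∑ i ∈ s, y i ^ 2 ≤ A * ε^2 * s.card}).toReal) :=
        (ENNReal.ofReal_toReal hne).symm
    _ ≤ ENNReal.ofReal (Real.exp (-(gFun h A τ) * s.card)) := by
        apply ENNReal.ofReal_le_ofReal
        exact hcher.trans hreal

lemma gFun_eq (h a t : ℝ) : gFun h a t = (-(a*h) + Real.log (1+h) + t*h/(1+h)) / 2 := by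
  rw [gFun, fFun]
  have e1 : (1:ℝ) - -h = 1 + h := by ring
  rw [e1]; ring

lemma gFun_contOn (a t : ℝ) : ContinuousOn (fun h => gFun h a t) (Set.Icc (0:ℝ) 1) := by
  simp_rw [gFun_eq]
  apply ContinuousOn.div_const
  apply ContinuousOn.add
  apply ContinuousOn.add
  · exact (continuous_const.mul continuous_id).neg.continuousOn
  · apply ContinuousOn.log
    · exact (continuous_const.add continuous_id).continuousOn
    · intro x hx; have h1 := hx.1; intro hc; linarith
  · apply ContinuousOn.div
    · exact (continuous_const.mul continuous_id).continuousOn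
    · exact (continuous_const.add continuous_id).continuousOn
    · intro x hx; have := hx.1; intro hc; linarith

lemma gSup_attained (a t : ℝ) : ∃ h ∈ Set.Icc (0:ℝ) 1, gFun h a t = gSup a t ∧
    ∀ h' ∈ Set.Icc (0:ℝ) 1, gFun h' a t ≤ gSup a t := by
  obtain ⟨x, hx, hmax⟩ := isCompact_Icc.exists_isMaxOn (Set.nonempty_Icc.mpr zero_le_one)
    (gFun_contOn a t)
  have hb : BddAbove ((fun h => gFun h a t) '' Set.Icc 0 1) := by
    refine ⟨gFun x a t, ?_⟩
    rintro y ⟨h', hh', rfl⟩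
    exact hmax hh'
  have hle : ∀ h' ∈ Set.Icc (0:ℝ) 1, gFun h' a t ≤ gSup a t := fun h' hh' =>
    le_csSup hb (Set.mem_image_of_mem _ hh')
  refine ⟨x, hx, le_antisymm (hle x hx) (csSup_le
    (Set.Nonempty.image _ ⟨0, Set.left_mem_Icc.mpr zero_le_one⟩) ?_), hle⟩
  rintro y ⟨h', hh', rfl⟩
  exact hmax hh'

lemma log_ge (h : ℝ) (hh : 0 ≤ h) : h / (1+h) ≤ Real.log (1+h) := by
  have h1 : (0:ℝ) < 1 + h := by linarith
  have := Real.log_le_sub_one_of_pos (x := (1+h)⁻¹) (by positivity)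
  rw [Real.log_inv] at this
  have e : (1+h)⁻¹ - 1 = -(h/(1+h)) := by field_simp; ring
  rw [e] at this
  linarith

lemma gSup_pos (a t : ℝ) (ha0 : 0 < a) (ht : 0 < t) (ha : a < 1 + t) : 0 < gSup a t := by
  set δ : ℝ := 1 + t - a with hδ
  have hδ0 : 0 < δ := by linarith
  set h₀ : ℝ := min 1 (δ/(δ+2*a)) with hh₀
  have hh1 : h₀ ≤ 1 := min_le_left _ _
  have hh2 : h₀ ≤ δ/(δ+2*a) := min_le_right _ _
  have hh0 : 0 < h₀ := lt_min one_pos (by positivity)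
  have h1h : (0:ℝ) < 1 + h₀ := by linarith
  have key : 0 < gFun h₀ a t := by
    rw [gFun_eq]
    have hlog := log_ge h₀ hh0.le
    have hd : (0:ℝ) < δ + 2*a := by linarith
    have hin : a * (1 + h₀) < 1 + t := by
      have h3 : a * h₀ ≤ a * (δ/(δ+2*a)) := mul_le_mul_of_nonneg_left hh2 ha0.le
      have h4 : a * (δ/(δ+2*a)) < δ := by
        rw [mul_div_assoc'] at *
        rw [div_lt_iff₀ hd]
        nlinarith
      have : a * h₀ < δ := lt_of_le_of_lt h3 h4
      linarith [hδ]
    have h5 : a * h₀ * (1+h₀) < (1+t) * h₀ := by nlinarith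
    have h6 : a * h₀ < (1+t) * h₀ / (1+h₀) := (lt_div_iff₀ h1h).mpr h5
    have h7 : (1+t) * h₀ / (1+h₀) = h₀/(1+h₀) + t*h₀/(1+h₀) := by ring
    rw [h7] at h6
    have : 0 < -(a*h₀) + Real.log (1+h₀) + t*h₀/(1+h₀) := by linarith
    linarith
  have hat := gSup_attained a t
  obtain ⟨x, hx, hgx, hle⟩ := hat
  calc (0:ℝ) < gFun h₀ a t := key
    _ ≤ gSup a t := hle h₀ ⟨hh0.le, hh1⟩

lemma tail_summable {θ : ℕ → ℝ} (hθ : Summable (fun i => θ i ^ 2)) (d : ℕ) :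
    Summable (fun i => if d < i then θ i ^ 2 else 0) := by
  have : (fun i => if d < i then θ i ^ 2 else 0)
      = Set.indicator {i : ℕ | d < i} (fun i => θ i ^ 2) := by
    funext i; rw [Set.indicator_apply]; rfl
  rw [this]
  exact hθ.indicator _

lemma tailSum_nonneg {θ : ℕ → ℝ} (d : ℕ) : 0 ≤ tailSum θ d :=
  tsum_nonneg fun i => by positivity

lemma tailSum_diff {θ : ℕ → ℝ} (hθ : Summable (fun i => θ i ^ 2)) {d D : ℕ} (hdD : d ≤ D) :
    tailSum θ d = (∑ i ∈ Finset.Ioc d D, θ i ^ 2) + tailSum θ D := by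
  have hpt : ∀ i : ℕ, (if d < i then θ i ^ 2 else 0)
      = (if i ∈ Finset.Ioc d D then θ i ^ 2 else 0) + (if D < i then θ i ^ 2 else 0) := by
    intro i
    by_cases h1 : d < i
    · by_cases h2 : D < i
      · rw [if_pos h1, if_pos h2,
          if_neg (fun hm => (by omega : ¬ (d < i ∧ i ≤ D)) (Finset.mem_Ioc.mp hm))]
        ring
      · rw [if_pos h1, if_neg h2, if_pos (Finset.mem_Ioc.mpr ⟨h1, by omega⟩)]
        ring
    · rw [if_neg h1, if_neg (fun hm => h1 (Finset.mem_Ioc.mp hm).1),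
        if_neg (by omega : ¬ D < i)]
      ring
  rw [tailSum, tailSum]
  calc ∑' i, (if d < i then θ i ^ 2 else 0)
      = ∑' i, ((if i ∈ Finset.Ioc d D then θ i ^ 2 else 0) + (if D < i then θ i ^ 2 else 0)) := by
        exact tsum_congr hpt
    _ = (∑' i, if i ∈ Finset.Ioc d D then θ i ^ 2 else 0)
          + ∑' i, (if D < i then θ i ^ 2 else 0) := by
        apply Summable.tsum_add _ (tail_summable hθ D)
        exact summable_of_ne_finset_zero (s := Finset.Ioc d D) (fun i hi => if_neg hi)
    _ = (∑ i ∈ Finset.Ioc d D, θ i ^ 2) + ∑' i, (if D < i then θ i ^ 2 else 0) := by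
        congr 1
        rw [tsum_eq_sum (s := Finset.Ioc d D) (fun i hi => if_neg hi)]
        exact Finset.sum_congr rfl fun i hi => if_pos hi

lemma effDim_mem {ε τ : ℝ} (hε : 0 < ε) (hτ : 0 < τ) {θ : ℕ → ℝ}
    (hθ : Summable (fun i => θ i ^ 2)) :
    1 ≤ effDim ε τ θ ∧ ∀ d' : ℕ, 1 ≤ d' → rErr ε τ θ (effDim ε τ θ) ≤ rErr ε τ θ d' := by
  have hne : {d : ℕ | 1 ≤ d ∧ ∀ d' : ℕ, 1 ≤ d' → rErr ε τ θ d ≤ rErr ε τ θ d'}.Nonempty := by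
    obtain ⟨N, hN⟩ := exists_nat_gt (rErr ε τ θ 1 / (τ * ε ^ 2))
    set M := max N 1 with hM
    obtain ⟨d₀, hd₀mem, hd₀min⟩ := (Finset.Icc 1 M).exists_min_image (rErr ε τ θ)
      ⟨1, Finset.mem_Icc.mpr ⟨le_refl 1, le_max_right N 1⟩⟩
    refine ⟨d₀, (Finset.mem_Icc.mp hd₀mem).1, ?_⟩
    intro d' hd'
    by_cases hle : d' ≤ M
    · exact hd₀min d' (Finset.mem_Icc.mpr ⟨hd', hle⟩)
    · push_neg at hle
      have h1 : rErr ε τ θ d₀ ≤ rErr ε τ θ 1 :=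
        hd₀min 1 (Finset.mem_Icc.mpr ⟨le_refl 1, le_max_right N 1⟩)
      have h2 : rErr ε τ θ 1 < τ * N * ε ^ 2 := by
        have h3 : rErr ε τ θ 1 / (τ * ε ^ 2) < N := hN
        rw [div_lt_iff₀ (by positivity)] at h3
        calc rErr ε τ θ 1 < N * (τ * ε ^ 2) := h3
          _ = τ * N * ε ^ 2 := by ring
      have h4 : τ * N * ε ^ 2 ≤ τ * d' * ε ^ 2 := by
        have hNd : (N:ℝ) ≤ d' := by
          have : N ≤ d' := le_trans (le_max_left N 1) hle.le
          exact_mod_cast this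
        have h6 : τ * (N:ℝ) ≤ τ * (d':ℝ) := mul_le_mul_of_nonneg_left hNd hτ.le
        have := mul_le_mul_of_nonneg_right h6 (sq_nonneg ε)
        linarith
      have h5 : τ * d' * ε ^ 2 ≤ rErr ε τ θ d' := by
        rw [rErr]
        linarith [tailSum_nonneg (θ := θ) d']
      linarith
  exact Nat.sInf_mem hne

lemma sum_fin_filter (D d : ℕ) (f : ℕ → ℝ) :
    ∑ i ∈ Finset.univ.filter (fun i : Fin D => d ≤ (i:ℕ)), f ((i:ℕ)+1)
      = ∑ j ∈ Finset.Ioc d D, f j := by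
  rw [Finset.sum_filter]
  rw [Fin.sum_univ_eq_sum_range (fun i => if d ≤ i then f (i+1) else 0) D]
  rw [← Finset.sum_filter]
  have h1 : (Finset.range D).filter (fun i => d ≤ i) = Finset.Ico d D := by
    ext i; simp only [Finset.mem_filter, Finset.mem_range, Finset.mem_Ico]; omega
  rw [h1]
  rw [show Finset.Ioc d D = Finset.map ⟨Nat.succ, Nat.succ_injective⟩ (Finset.Ico d D) from by
    ext j
    simp only [Finset.mem_map, Finset.mem_Ico, Finset.mem_Ioc, Function.Embedding.coeFn_mk]
    constructor
    · intro hj; exact ⟨j - 1, by omega, by omega⟩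
    · rintro ⟨i, hi, rfl⟩; omega]
  rw [Finset.sum_map]
  rfl

lemma geom_bound (β : ℝ) (hβ : 0 < β) (n D : ℕ) :
    ∑ d ∈ Finset.Icc 1 (D - n), Real.exp (-β * ((D - d : ℕ):ℝ))
      ≤ Real.exp (-β * n) / (1 - Real.exp (-β)) := by
  set r := Real.exp (-β) with hr
  have hr0 : 0 < r := Real.exp_pos _
  have hr1 : r < 1 := Real.exp_lt_one_iff.mpr (by linarith)
  have hterm : ∀ m : ℕ, Real.exp (-β * (m:ℝ)) = r ^ m := by
    intro m
    rw [mul_comm, Real.exp_nat_mul]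
  calc ∑ d ∈ Finset.Icc 1 (D - n), Real.exp (-β * ((D - d : ℕ):ℝ))
      = ∑ d ∈ Finset.Icc 1 (D - n), r ^ (D - d) := by
        exact Finset.sum_congr rfl fun d _ => hterm (D - d)
    _ = ∑ m ∈ (Finset.Icc 1 (D - n)).image (fun d => D - d), r ^ m := by
        rw [Finset.sum_image]
        intro x hx y hy hxy
        have hx' := Finset.mem_Icc.mp hx
        have hy' := Finset.mem_Icc.mp hy
        simp only at hxy
        omega
    _ ≤ ∑ m ∈ Finset.Icc n D, r ^ m := by
        apply Finset.sum_le_sum_of_subset_of_nonneg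
        · intro m hm
          obtain ⟨d, hd, rfl⟩ := Finset.mem_image.mp hm
          have hd' := Finset.mem_Icc.mp hd
          exact Finset.mem_Icc.mpr ⟨by omega, by omega⟩
        · intro m _ _; positivity
    _ = r ^ n * ∑ k ∈ Finset.range (D + 1 - n), r ^ k := by
        rw [← Finset.Ico_add_one_right_eq_Icc, Finset.sum_Ico_eq_sum_range, Finset.mul_sum]
        exact Finset.sum_congr rfl fun k _ => by rw [pow_add]
    _ ≤ r ^ n * (1 / (1 - r)) := by
        apply mul_le_mul_of_nonneg_left _ (by positivity)
        rw [geom_sum_eq (ne_of_lt hr1)]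
        have h1r : (0:ℝ) < 1 - r := by linarith
        have heq : (r ^ (D+1-n) - 1)/(r - 1) = (1 - r ^ (D+1-n))/(1 - r) := by
          rw [← neg_div_neg_eq]; ring_nf
        rw [heq, div_le_div_iff₀ h1r h1r]
        nlinarith [pow_nonneg hr0.le (D+1-n)]
    _ = Real.exp (-β * n) / (1 - r) := by
        rw [hterm n]; ring

theorem stmt11 (ε τ A : ℝ) (hε : 0 < ε) (hτ : 0 < τ) (hA0 : 0 < A) (hA : A < 1 + τ) :
    0 < gSup A τ ∧
    ∀ θ : ℕ → ℝ, Summable (fun i => θ i ^ 2) →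
    ∀ n : ℕ, 1 ≤ n →
    ∀ P : Measure (ℕ → ℝ), IsGaussianProduct ε θ P →
    P {x | ∃ d : ℕ, 1 ≤ d ∧ d + n ≤ effDim ε τ θ ∧
        critF ε A x d ≤ critF ε A x (effDim ε τ θ)} ≤
      ENNReal.ofReal (Real.exp (-(gSup A τ) * n) / (1 - Real.exp (-(gSup A τ)))) := by
  have hβpos : 0 < gSup A τ := gSup_pos A τ hA0 hτ hA
  refine ⟨hβpos, ?_⟩
  intro θ hθ n hn P hPg
  obtain ⟨hPprob, hPmap⟩ := hPg
  set β : ℝ := gSup A τ with hβ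
  obtain ⟨h₀, hh₀Icc, hgh₀, _⟩ := gSup_attained A τ
  have hh₀pos : 0 < h₀ := by
    rcases lt_or_eq_of_le hh₀Icc.1 with h | h
    · exact h
    · exfalso
      have hg0 : gFun 0 A τ = 0 := by rw [gFun_eq]; simp
      rw [← h, hg0] at hgh₀
      rw [← hβ] at hgh₀
      linarith
  set D : ℕ := effDim ε τ θ with hD
  obtain ⟨hD1, hDmin⟩ := effDim_mem hε hτ hθ
  rw [← hD] at hD1 hDmin
  set T : (ℕ → ℝ) → (Fin D → ℝ) := fun x (i : Fin D) => x ((i:ℕ) + 1) with hT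
  have hTm : Measurable T := measurable_pi_lambda _ (fun i => measurable_pi_apply _)
  set sd : ℕ → Finset (Fin D) := fun d => Finset.univ.filter (fun i : Fin D => d ≤ (i:ℕ))
    with hsd
  set Sd : ℕ → Set (Fin D → ℝ) :=
    fun d => {y | ∑ i ∈ sd d, y i ^ 2 ≤ A * ε^2 * ((sd d).card)} with hSd
  have hSdm : ∀ d, MeasurableSet (Sd d) := by
    intro d
    apply measurableSet_le _ measurable_const
    exact Finset.measurable_sum _ (fun i _ => (measurable_pi_apply i).pow_const 2)
  -- cardinality of sd d
  have hcard : ∀ d : ℕ, ((sd d).card : ℝ) = ((D - d : ℕ) : ℝ) := by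
    intro d
    have h1 : ((sd d).card : ℝ) = ∑ i ∈ sd d, (fun _ : ℕ => (1:ℝ)) ((i:ℕ)+1) := by
      rw [Finset.sum_const, nsmul_eq_mul, mul_one]
    rw [h1, hsd, sum_fin_filter D d (fun _ => (1:ℝ)), Finset.sum_const, nsmul_eq_mul, mul_one,
      Nat.card_Ioc]
  -- inclusion into finite union
  have hincl : {x | ∃ d : ℕ, 1 ≤ d ∧ d + n ≤ D ∧ critF ε A x d ≤ critF ε A x D}
      ⊆ ⋃ d ∈ Finset.Icc 1 (D - n), T ⁻¹' (Sd d) := by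
    rintro x ⟨d, hd1, hdn, hcrit⟩
    have hdD : d ≤ D := by omega
    apply Set.mem_biUnion (Finset.mem_Icc.mpr ⟨hd1, by omega⟩)
    show ∑ i ∈ sd d, (T x) i ^ 2 ≤ A * ε^2 * ((sd d).card)
    have hsum : ∑ i ∈ sd d, (T x) i ^ 2 = ∑ j ∈ Finset.Ioc d D, x j ^ 2 := by
      rw [hsd]
      exact sum_fin_filter D d (fun j => x j ^ 2)
    rw [hsum, hcard d]
    have hsplit : ∑ i ∈ Finset.Icc 1 D, x i ^ 2
        = (∑ i ∈ Finset.Icc 1 d, x i ^ 2) + ∑ i ∈ Finset.Ioc d D, x i ^ 2 := by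
      rw [show Finset.Icc 1 D = Finset.Ioc 0 D from by rw [← Finset.Icc_add_one_left_eq_Ioc]; rfl,
        show Finset.Icc 1 d = Finset.Ioc 0 d from by rw [← Finset.Icc_add_one_left_eq_Ioc]; rfl]
      exact (Finset.sum_Ioc_consecutive _ (Nat.zero_le d) hdD).symm
    rw [critF, critF] at hcrit
    have hcast : ((D - d : ℕ) : ℝ) = (D : ℝ) - (d : ℝ) := by
      rw [Nat.cast_sub hdD]
    rw [hcast]
    have := hcrit
    nlinarith [hsplit, this]
  -- per-d bound
  have hper : ∀ d ∈ Finset.Icc 1 (D - n),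
      P (T ⁻¹' (Sd d)) ≤ ENNReal.ofReal (Real.exp (-β * ((D - d : ℕ):ℝ))) := by
    intro d hd
    have hd' := Finset.mem_Icc.mp hd
    have hd1 : 1 ≤ d := hd'.1
    have hdD : d ≤ D ∧ d + n ≤ D := by omega
    have hmap : P (T ⁻¹' (Sd d)) = (Measure.pi fun i : Fin D =>
        gaussianReal (θ ((i:ℕ) + 1)) ((ε ^ 2).toNNReal)) (Sd d) := by
      rw [← hPmap D, Measure.map_apply hTm (hSdm d)]
    rw [hmap]
    -- hypothesis on the means
    have hSbound : τ * ε^2 * ((sd d).card) ≤ ∑ i ∈ sd d, θ ((i:ℕ)+1) ^ 2 := by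
      have h1 : ∑ i ∈ sd d, θ ((i:ℕ)+1) ^ 2 = ∑ j ∈ Finset.Ioc d D, θ j ^ 2 := by
        rw [hsd]; exact sum_fin_filter D d (fun j => θ j ^ 2)
      have h2 := hDmin d hd1
      rw [rErr, rErr] at h2
      have h3 := tailSum_diff hθ hdD.1 (θ := θ)
      rw [hcard d, Nat.cast_sub hdD.1, h1]
      nlinarith [h2, h3]
    have hch := chernoff ε A τ h₀ hε hh₀pos (fun i : Fin D => θ ((i:ℕ)+1)) (sd d) hSbound
    refine le_trans hch ?_
    apply le_of_eq
    congr 1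
    rw [hgh₀, ← hβ, hcard d]
  -- put together
  calc P {x | ∃ d : ℕ, 1 ≤ d ∧ d + n ≤ D ∧ critF ε A x d ≤ critF ε A x D}
      ≤ P (⋃ d ∈ Finset.Icc 1 (D - n), T ⁻¹' (Sd d)) := measure_mono hincl
    _ ≤ ∑ d ∈ Finset.Icc 1 (D - n), P (T ⁻¹' (Sd d)) := measure_biUnion_finset_le _ _
    _ ≤ ∑ d ∈ Finset.Icc 1 (D - n), ENNReal.ofReal (Real.exp (-β * ((D - d : ℕ):ℝ))) :=
        Finset.sum_le_sum hper
    _ = ENNReal.ofReal (∑ d ∈ Finset.Icc 1 (D - n), Real.exp (-β * ((D - d : ℕ):ℝ))) :=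
        (ENNReal.ofReal_sum_of_nonneg (fun d _ => (Real.exp_pos _).le)).symm
    _ ≤ ENNReal.ofReal (Real.exp (-β * n) / (1 - Real.exp (-β))) :=
        ENNReal.ofReal_le_ofReal (geom_bound β hβpos n D)
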